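/- arXiv:1401.7504 — 3 statements merged into one kernel-verified Lean document; each statement's English description precedes it below -/
import Mathlib

section
/- Let (x₁,x₂,x₃) ∈ 𝔛 with Im(x₃) ≠ 0 and x₁ + x₂ ≠ 1. Set z = (x₁ + x₂/x₃)/(x₁ + x₂ − 1), w = x₃ (the holomorphic coordinates of the point), and z' = (x₁ + x₂/conj(x₃))/(x₁ + x₂ − 1), w' = conj(x₃) (the coordinates of its image under the involution 𝒯(x₁,x₂,x₃) = (x₁,x₂,conj(x₃))). Then z'·conj(w·z) = 1 and w' = conj(w); in particular w·z ≠ 0 and in these coordinates 𝒯 is the antiholomorphic map (z,w) ↦ (1/conj(w·z), conj(w)). -/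
noncomputable section

open Complex ComplexConjugate

/-- Membership in Falbel's cross-ratio variety 𝔛. -/
def memX (x₁ x₂ x₃ : ℂ) : Prop :=
  x₁ ≠ 0 ∧ x₂ ≠ 0 ∧ x₃ ≠ 0 ∧
  ‖x₂‖ = ‖x₁‖ * ‖x₃‖ ∧
  2 * (‖x₁‖) ^ 2 * x₃.re =
    (‖x₁‖) ^ 2 + (‖x₂‖) ^ 2 - 2 * x₁.re - 2 * x₂.re + 1

/-!
Write `d = x₁ + x₂ - 1`. Clearing denominators, `z' · conj (w z)` equals
`(x₁ x̄₃ + x₂)(x̄₁ x̄₃ + x̄₂) / (x̄₃ |d|²)`, and the two real equations defining 𝔛, read as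
identities between `xᵢ` and `x̄ᵢ`, say exactly that this numerator is `x̄₃ |d|²`.
-/

/-- The holomorphic coordinate `z` of the point `(x₁, x₂, x₃)`. -/
def coordZ (x₁ x₂ x₃ : ℂ) : ℂ := (x₁ + x₂ / x₃) / (x₁ + x₂ - 1)

variable {x₁ x₂ x₃ : ℂ}

theorem coordZ_conj_mul_conj (hx₃ : x₃ ≠ 0) :
    coordZ x₁ x₂ (conj x₃) * conj (x₃ * coordZ x₁ x₂ x₃) =
      (x₁ * conj x₃ + x₂) * conj (x₁ * x₃ + x₂) /
        (conj x₃ * ((x₁ + x₂ - 1) * conj (x₁ + x₂ - 1))) := by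
  have : conj x₃ ≠ 0 := (map_ne_zero _).mpr hx₃
  simp only [coordZ, map_mul, map_div₀, map_add]
  field_simp

theorem memX.mul_conj_x₂ (hx : memX x₁ x₂ x₃) :
    x₂ * conj x₂ = x₁ * conj x₁ * (x₃ * conj x₃) := by
  simp only [mul_conj', hx.2.2.2.1]
  push_cast
  ring

theorem memX.mul_conj_x₁_mul_add_conj_x₃ (hx : memX x₁ x₂ x₃) :
    x₁ * conj x₁ * (x₃ + conj x₃) =
      x₁ * conj x₁ + x₂ * conj x₂ - (x₁ + conj x₁) - (x₂ + conj x₂) + 1 := by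
  simp only [mul_conj', add_conj]
  exact_mod_cast by linear_combination hx.2.2.2.2

theorem memX.numerator_mul_conj (hx : memX x₁ x₂ x₃) :
    (x₁ * conj x₃ + x₂) * conj (x₁ * x₃ + x₂) =
      conj x₃ * ((x₁ + x₂ - 1) * conj (x₁ + x₂ - 1)) := by
  simp only [map_add, map_mul, map_sub, map_one]
  linear_combination conj x₃ * hx.mul_conj_x₁_mul_add_conj_x₃ + hx.mul_conj_x₂

theorem memX.coordZ_conj_mul_conj_eq_one (hx : memX x₁ x₂ x₃) (hsum : x₁ + x₂ ≠ 1) :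
    coordZ x₁ x₂ (conj x₃) * conj (x₃ * coordZ x₁ x₂ x₃) = 1 := by
  have hx₃ : x₃ ≠ 0 := hx.2.2.1
  have hd : x₁ + x₂ - 1 ≠ 0 := sub_ne_zero.mpr hsum
  rw [coordZ_conj_mul_conj hx₃, hx.numerator_mul_conj, div_self]
  exact mul_ne_zero ((map_ne_zero _).mpr hx₃) (mul_ne_zero hd ((map_ne_zero _).mpr hd))

theorem involution_coordinate_expression_general (x₁ x₂ x₃ : ℂ)
    (hx : memX x₁ x₂ x₃) (hsum : x₁ + x₂ ≠ 1)
    (z w z' w' : ℂ)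
    (hz : z = (x₁ + x₂ / x₃) / (x₁ + x₂ - 1))
    (hw : w = x₃)
    (hz' : z' = (x₁ + x₂ / conj x₃) / (x₁ + x₂ - 1))
    (hw' : w' = conj x₃) :
    z' * conj (w * z) = 1 ∧ w' = conj w ∧ w * z ≠ 0 := by
  subst hz hw hz' hw'
  have key := hx.coordZ_conj_mul_conj_eq_one hsum
  exact ⟨key, rfl, (map_ne_zero _).mp (right_ne_zero_of_mul_eq_one key)⟩

/-- In the holomorphic coordinates `z = (x₁ + x₂/x₃)/(x₁ + x₂ − 1)`, `w = x₃`,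
the involution `𝒯(x₁,x₂,x₃) = (x₁,x₂,conj x₃)` is the antiholomorphic map
`(z,w) ↦ (1/conj(w·z), conj w)`. -/
theorem involution_coordinate_expression (x₁ x₂ x₃ : ℂ)
    (hx : memX x₁ x₂ x₃) (hIm : x₃.im ≠ 0) (hsum : x₁ + x₂ ≠ 1)
    (z w z' w' : ℂ)
    (hz : z = (x₁ + x₂ / x₃) / (x₁ + x₂ - 1))
    (hw : w = x₃)
    (hz' : z' = (x₁ + x₂ / conj x₃) / (x₁ + x₂ - 1))
    (hw' : w' = conj x₃) :
    z' * conj (w * z) = 1 ∧ w' = conj w ∧ w * z ≠ 0 :=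
  involution_coordinate_expression_general x₁ x₂ x₃ hx hsum z w z' w' hz hw hz' hw'
end
end

section
/- Let p₁, p₂, p₃, p₄ ∈ ℂ³ be null lifts with ⟨pᵢ,pⱼ⟩ ≠ 0 for all i ≠ j, with cross-ratios 𝕏₁, 𝕏₂, 𝕏₃ and Cartan invariants 𝔸₁, 𝔸₂, 𝔸₃, 𝔸₄. Then 𝕏₁/|𝕏₁| = exp(i·(𝔸₁ − 𝔸₂)), 𝕏₂/|𝕏₂| = exp(−i·(𝔸₂ + 𝔸₄)), 𝕏₃/|𝕏₃| = exp(i·(𝔸₄ − 𝔸₁)), and exp(i·𝔸₃) = exp(i·(𝔸₂ − 𝔸₁ + 𝔸₄)). -/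
noncomputable section

open Complex ComplexConjugate

/-- The Hermitian form of signature (2,1) on ℂ³. -/
def herm (z w : Fin 3 → ℂ) : ℂ :=
  z 0 * conj (w 2) + z 1 * conj (w 1) + z 2 * conj (w 0)

/-- A null lift: a nonzero vector with `⟨p,p⟩ = 0`. -/
def IsNullLift (p : Fin 3 → ℂ) : Prop := p ≠ 0 ∧ herm p p = 0

/-- The complex cross-ratio `𝕏(p,q,r,s) = (⟨r,p⟩·⟨s,q⟩)/(⟨s,p⟩·⟨r,q⟩)`. -/
def crossRatio (p q r s : Fin 3 → ℂ) : ℂ :=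
  (herm r p * herm s q) / (herm s p * herm r q)

/-- Cartan's angular invariant `𝔸(p,q,r) = arg(−⟨p,q⟩·⟨q,r⟩·⟨r,p⟩)`. -/
def cartan (p q r : Fin 3 → ℂ) : ℝ :=
  Complex.arg (-(herm p q * herm q r * herm r p))

/-!
Write `T(p,q,r) = -⟨p,q⟩⟨q,r⟩⟨r,p⟩`, so that `𝔸(p,q,r) = arg T(p,q,r)`. Since
`⟨w,z⟩ = conj ⟨z,w⟩`, swapping two arguments of `T` conjugates it, and both
`𝕏(p,q,r,s) · |⟨s,p⟩⟨r,q⟩⟨r,s⟩|²` and `T(q,r,s) · conj T(p,r,s) · T(p,q,s) · conj T(p,q,r)`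
are products of terms `z · conj z`, hence positive multiples of `T(q,r,s) · conj T(p,r,s)`
and of `1` respectively. Read in `ℝ/2πℤ`, this gives `arg 𝕏(p,q,r,s) = 𝔸(q,r,s) - 𝔸(p,r,s)`,
`𝔸(q,p,r) = -𝔸(p,q,r)` and the cocycle relation, from which the four identities follow.
-/

section Hermitian

variable (p q r s z w : Fin 3 → ℂ)

theorem herm_conj_symm : conj (herm w z) = herm z w := by
  simp only [herm, map_add, map_mul, conj_conj]
  ring

variable {z w} in
theorem herm_ne_zero_comm (h : herm z w ≠ 0) : herm w z ≠ 0 := by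
  rwa [← herm_conj_symm, map_ne_zero]

def tripleProduct : ℂ := -(herm p q * herm q r * herm r p)

theorem cartan_eq_arg_tripleProduct : cartan p q r = arg (tripleProduct p q r) := rfl

variable {p q r} in
theorem tripleProduct_ne_zero (hpq : herm p q ≠ 0) (hqr : herm q r ≠ 0) (hrp : herm r p ≠ 0) :
    tripleProduct p q r ≠ 0 :=
  neg_ne_zero.mpr (mul_ne_zero (mul_ne_zero hpq hqr) hrp)

theorem tripleProduct_swap : tripleProduct q p r = conj (tripleProduct p q r) := by
  simp only [tripleProduct, map_neg, map_mul, herm_conj_symm]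
  ring

variable {p q r s} in
theorem crossRatio_mul_sq_norm (hsp : herm s p ≠ 0) (hrq : herm r q ≠ 0) :
    crossRatio p q r s * ((‖herm s p‖ * ‖herm r q‖ * ‖herm r s‖) ^ 2 : ℝ) =
      tripleProduct q r s * conj (tripleProduct p r s) := by
  simp only [crossRatio, tripleProduct, ofReal_pow, ofReal_mul, mul_pow, ← mul_conj', map_neg,
    map_mul, herm_conj_symm]
  field_simp

theorem tripleProduct_cocycle :
    tripleProduct q r s * conj (tripleProduct p r s) *
        (tripleProduct p q s * conj (tripleProduct p q r)) =
      ((‖herm p q‖ * ‖herm p r‖ * ‖herm p s‖ * ‖herm q r‖ * ‖herm q s‖ * ‖herm r s‖) ^ 2 : ℝ) := by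
  simp only [tripleProduct, ofReal_pow, ofReal_mul, mul_pow, ← mul_conj', map_neg, map_mul,
    herm_conj_symm]
  ring

end Hermitian

section Angle

theorem arg_mul_conj_coe_angle {z w : ℂ} (hz : z ≠ 0) (hw : w ≠ 0) :
    (arg (z * conj w) : Real.Angle) = arg z - arg w := by
  rw [arg_mul_coe_angle hz ((map_ne_zero _).mpr hw), arg_conj_coe_angle, sub_eq_add_neg]

theorem exp_I_mul_eq_exp_I_mul {θ ψ : ℝ} (h : (θ : Real.Angle) = ψ) :
    exp (I * θ) = exp (I * ψ) := by
  simpa [mul_comm I] using congrArg (fun a : Real.Angle => (a.toCircle : ℂ)) h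

theorem div_norm_eq_exp_I_mul {x : ℂ} (hx : x ≠ 0) {θ : ℝ} (h : (arg x : Real.Angle) = θ) :
    x / ((‖x‖ : ℝ) : ℂ) = exp (I * θ) := by
  rw [← exp_I_mul_eq_exp_I_mul h, div_eq_iff (ofReal_ne_zero.mpr (norm_ne_zero_iff.mpr hx)),
    mul_comm, mul_comm I, norm_mul_exp_arg_mul_I]

theorem cartan_swap (p q r : Fin 3 → ℂ) : (cartan q p r : Real.Angle) = -cartan p q r := by
  rw [cartan_eq_arg_tripleProduct, tripleProduct_swap, arg_conj_coe_angle,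
    cartan_eq_arg_tripleProduct]

variable {p q r s : Fin 3 → ℂ}

theorem crossRatio_ne_zero (hrp : herm r p ≠ 0) (hsq : herm s q ≠ 0) (hsp : herm s p ≠ 0)
    (hrq : herm r q ≠ 0) : crossRatio p q r s ≠ 0 :=
  div_ne_zero (mul_ne_zero hrp hsq) (mul_ne_zero hsp hrq)

theorem arg_crossRatio (hrp : herm r p ≠ 0) (hsq : herm s q ≠ 0) (hsp : herm s p ≠ 0)
    (hrq : herm r q ≠ 0) (hrs : herm r s ≠ 0) :
    (arg (crossRatio p q r s) : Real.Angle) = cartan q r s - cartan p r s := by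
  have hpos : 0 < (‖herm s p‖ * ‖herm r q‖ * ‖herm r s‖) ^ 2 := by positivity
  rw [← arg_mul_real hpos, crossRatio_mul_sq_norm hsp hrq,
    arg_mul_conj_coe_angle (tripleProduct_ne_zero (herm_ne_zero_comm hrq) hrs hsq)
      (tripleProduct_ne_zero (herm_ne_zero_comm hrp) hrs hsp)]
  rfl

theorem cartan_cocycle (hpq : herm p q ≠ 0) (hpr : herm p r ≠ 0) (hps : herm p s ≠ 0)
    (hqr : herm q r ≠ 0) (hqs : herm q s ≠ 0) (hrs : herm r s ≠ 0) :
    (cartan p q s : Real.Angle) = cartan p r s - cartan q r s + cartan p q r := by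
  have hqrs := tripleProduct_ne_zero hqr hrs (herm_ne_zero_comm hqs)
  have hprs := tripleProduct_ne_zero hpr hrs (herm_ne_zero_comm hps)
  have hpqs := tripleProduct_ne_zero hpq hqs (herm_ne_zero_comm hps)
  have hpqr := tripleProduct_ne_zero hpq hqr (herm_ne_zero_comm hpr)
  have h := congrArg (fun z => (arg z : Real.Angle)) (tripleProduct_cocycle p q r s)
  rw [arg_mul_coe_angle (mul_ne_zero hqrs ((map_ne_zero _).mpr hprs))
      (mul_ne_zero hpqs ((map_ne_zero _).mpr hpqr)),
    arg_mul_conj_coe_angle hqrs hprs, arg_mul_conj_coe_angle hpqs hpqr,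
    arg_ofReal_of_nonneg, Real.Angle.coe_zero] at h
  · simp only [cartan_eq_arg_tripleProduct]
    rw [← sub_eq_zero, ← h]
    abel
  · positivity

theorem crossRatio_div_norm (hrp : herm r p ≠ 0) (hsq : herm s q ≠ 0)
    (hsp : herm s p ≠ 0) (hrq : herm r q ≠ 0) (hrs : herm r s ≠ 0) {θ : ℝ}
    (hθ : (θ : Real.Angle) = cartan q r s - cartan p r s) :
    crossRatio p q r s / ((‖crossRatio p q r s‖ : ℝ) : ℂ) = exp (I * θ) :=
  div_norm_eq_exp_I_mul (crossRatio_ne_zero hrp hsq hsp hrq)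
    ((arg_crossRatio hrp hsq hsp hrq hrs).trans hθ.symm)

end Angle

theorem arg_crossRatio_eq_cartan_general (p : Fin 4 → Fin 3 → ℂ)
    (hne : ∀ i j, i ≠ j → herm (p i) (p j) ≠ 0)
    (X₁ X₂ X₃ : ℂ) (A₁ A₂ A₃ A₄ : ℝ)
    (hX₁ : X₁ = crossRatio (p 0) (p 1) (p 2) (p 3))
    (hX₂ : X₂ = crossRatio (p 0) (p 2) (p 1) (p 3))
    (hX₃ : X₃ = crossRatio (p 1) (p 2) (p 0) (p 3))
    (hA₁ : A₁ = cartan (p 1) (p 2) (p 3))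
    (hA₂ : A₂ = cartan (p 0) (p 2) (p 3))
    (hA₃ : A₃ = cartan (p 0) (p 1) (p 3))
    (hA₄ : A₄ = cartan (p 0) (p 1) (p 2)) :
    X₁ / ((‖X₁‖ : ℝ) : ℂ) = Complex.exp (Complex.I * ((A₁ - A₂ : ℝ) : ℂ)) ∧
    X₂ / ((‖X₂‖ : ℝ) : ℂ) = Complex.exp (-(Complex.I * ((A₂ + A₄ : ℝ) : ℂ))) ∧
    X₃ / ((‖X₃‖ : ℝ) : ℂ) = Complex.exp (Complex.I * ((A₄ - A₁ : ℝ) : ℂ)) ∧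
    Complex.exp (Complex.I * (A₃ : ℂ)) =
      Complex.exp (Complex.I * ((A₂ - A₁ + A₄ : ℝ) : ℂ)) := by
  subst hX₁ hX₂ hX₃ hA₁ hA₂ hA₃ hA₄
  have hcocycle : (cartan (p 0) (p 1) (p 3) : Real.Angle) =
      cartan (p 0) (p 2) (p 3) - cartan (p 1) (p 2) (p 3) + cartan (p 0) (p 1) (p 2) := by
    apply cartan_cocycle <;> exact hne _ _ (by decide)
  rw [← mul_neg, ← ofReal_neg]
  refine ⟨crossRatio_div_norm ?_ ?_ ?_ ?_ ?_ ?θ₁, crossRatio_div_norm ?_ ?_ ?_ ?_ ?_ ?θ₂,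
    crossRatio_div_norm ?_ ?_ ?_ ?_ ?_ ?θ₃, exp_I_mul_eq_exp_I_mul ?θ₄⟩
  case θ₁ => rw [Real.Angle.coe_sub]
  case θ₂ =>
    rw [cartan_swap (p 1) (p 2), hcocycle, Real.Angle.coe_neg, Real.Angle.coe_add]
    abel
  case θ₃ =>
    rw [cartan_swap (p 0) (p 2), cartan_swap (p 0) (p 1), hcocycle, Real.Angle.coe_sub]
    abel
  case θ₄ => rw [hcocycle, Real.Angle.coe_add, Real.Angle.coe_sub]
  all_goals exact hne _ _ (by decide)

/-- The arguments of the cross-ratios in terms of the Cartan angular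
invariants: `arg 𝕏₁ = 𝔸₁ − 𝔸₂`, `arg 𝕏₂ = −(𝔸₂ + 𝔸₄)`, `arg 𝕏₃ = 𝔸₄ − 𝔸₁`,
and `𝔸₃ = 𝔸₂ − 𝔸₁ + 𝔸₄ (mod 2π)`. -/
theorem arg_crossRatio_eq_cartan (p : Fin 4 → Fin 3 → ℂ)
    (hnull : ∀ i, IsNullLift (p i))
    (hne : ∀ i j, i ≠ j → herm (p i) (p j) ≠ 0)
    (X₁ X₂ X₃ : ℂ) (A₁ A₂ A₃ A₄ : ℝ)
    (hX₁ : X₁ = crossRatio (p 0) (p 1) (p 2) (p 3))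
    (hX₂ : X₂ = crossRatio (p 0) (p 2) (p 1) (p 3))
    (hX₃ : X₃ = crossRatio (p 1) (p 2) (p 0) (p 3))
    (hA₁ : A₁ = cartan (p 1) (p 2) (p 3))
    (hA₂ : A₂ = cartan (p 0) (p 2) (p 3))
    (hA₃ : A₃ = cartan (p 0) (p 1) (p 3))
    (hA₄ : A₄ = cartan (p 0) (p 1) (p 2)) :
    X₁ / ((‖X₁‖ : ℝ) : ℂ) = Complex.exp (Complex.I * ((A₁ - A₂ : ℝ) : ℂ)) ∧
    X₂ / ((‖X₂‖ : ℝ) : ℂ) = Complex.exp (-(Complex.I * ((A₂ + A₄ : ℝ) : ℂ))) ∧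
    X₃ / ((‖X₃‖ : ℝ) : ℂ) = Complex.exp (Complex.I * ((A₄ - A₁ : ℝ) : ℂ)) ∧
    Complex.exp (Complex.I * (A₃ : ℂ)) =
      Complex.exp (Complex.I * ((A₂ - A₁ + A₄ : ℝ) : ℂ)) :=
  arg_crossRatio_eq_cartan_general p hne X₁ X₂ X₃ A₁ A₂ A₃ A₄ hX₁ hX₂ hX₃ hA₁ hA₂ hA₃ hA₄
end
end

section
/- Let p₁, p₂, p₃, p₄ ∈ ℂ³ be pairwise non-proportional null lifts with ⟨pᵢ,pⱼ⟩ ≠ 0 for all i ≠ j, with cross-ratios 𝕏₁, 𝕏₂, 𝕏₃. Then the following are equivalent: (i) p₁, p₂, p₃, p₄ lie in a common 2-dimensional complex subspace of ℂ³ (i.e. the four boundary points lie on one ℂ-circle); (ii) 𝕏₁ and 𝕏₂ are real and 𝕏₁ + 𝕏₂ = 1; (iii) 𝕏₁ and 𝕏₃ are real and 𝕏₃ + 1/𝕏₁ = 1; (iv) 𝕏₂ and 𝕏₃ are real and 1/𝕏₂ + 1/𝕏₃ = 1; (v) 𝕏₁, 𝕏₂, 𝕏₃ are all real and 𝕏₃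 = −𝕏₂/𝕏₁. -/
noncomputable section

open Complex ComplexConjugate

/-!
Write `cᵢⱼ = ⟨pᵢ, pⱼ⟩` and `dₖ = det (pₖ, p₁, p₀)`. Because the Gram matrix of two triples
is `P J Qᴴ` with `det J = -1`, the triple products `u = c₂₁c₁₀c₀₂` and `w = c₃₁c₁₀c₀₃` satisfy
`2 Re u = -|d₂|²` and `2 Re w = -|d₃|²`, and `T = d₃ · conj d₂` is a polynomial in the `cᵢⱼ`
with `|T|² = 4 Re u Re w`. With `m = c₁₀c₂₁c₀₃` and `S = |m|² + u w + T m = c₀₁c₁₀c₃₂ m ≠ 0`,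
the cross-ratios are `𝕏₁ = ū w / |m|²`, `𝕏₂ = S / |m|²` and `𝕏₃ = S / (u w)`.

As `p₀, p₁` are independent, the four points lie in a plane iff `d₂ = d₃ = 0`, i.e. iff
`Re u = Re w = 0`. Then `T = 0` and `ū = -u`, so the cross-ratios are `t, 1 - t, (t - 1) / t`
for a real `t`. Conversely, each of (ii)–(v) is a polynomial relation among `u, w, m, T`:
(iv) forces `T m = 0`, so `Re u Re w = 0`, and (v) forces `ū = -u`. For (ii) and (iii),
reality of `𝕏₁` means `ū w ∈ ℝ`, i.e. `Re u · w = Re w · u`; together with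
`|T|² = 4 Re u Re w` this shows that `Re u ≠ 0` would force `S = 0`.
-/

theorem Submodule.exists_finrank_eq_forall_mem_iff {K V ι : Type*} [Field K] [AddCommGroup V]
    [Module K V] [FiniteDimensional K V] {n : ℕ} {p : ι → V} {v : Fin n → V}
    (hv : LinearIndependent K v) (hvp : Set.range v ⊆ Set.range p) :
    (∃ W : Submodule K V, Module.finrank K W = n ∧ ∀ i, p i ∈ W) ↔
      ∀ i, p i ∈ Submodule.span K (Set.range v) := by
  have hspan : Module.finrank K (Submodule.span K (Set.range v)) = n := by
    simpa using finrank_span_eq_card hv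
  refine ⟨fun ⟨W, hW, hpW⟩ i => ?_, fun h => ⟨_, hspan, h⟩⟩
  have hle : Submodule.span K (Set.range v) ≤ W :=
    Submodule.span_le.2 (hvp.trans (Set.range_subset_iff.2 hpW))
  rw [Submodule.eq_of_le_of_finrank_eq hle (hspan.trans hW.symm)]
  exact hpW i

theorem Matrix.det_of_vecCons_eq_zero_iff_mem_span {K : Type*} [Field K] {x y z : Fin 3 → K}
    (hxy : LinearIndependent K ![x, y]) :
    (Matrix.of ![z, x, y]).det = 0 ↔ z ∈ Submodule.span K (Set.range ![x, y]) := by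
  rw [← not_iff_not, ← ne_eq, ← isUnit_iff_ne_zero, ← Matrix.isUnit_iff_isUnit_det,
    ← Matrix.linearIndependent_rows_iff_isUnit]
  exact linearIndependent_finCons.trans (and_iff_right hxy)

theorem conj_herm (z w : Fin 3 → ℂ) : conj (herm z w) = herm w z := by
  simp only [herm, map_add, map_mul, conj_conj]; ring

theorem det_herm_gram (x y z a b c : Fin 3 → ℂ) :
    (Matrix.of fun i j => herm (![x, y, z] i) (![a, b, c] j)).det =
      -((Matrix.of ![x, y, z]).det * conj (Matrix.of ![a, b, c]).det) := by
  simp only [Matrix.det_fin_three, Matrix.of_apply, Matrix.cons_val, herm, map_sub, map_add,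
    map_mul]
  ring

def hermTriple (x y z : Fin 3 → ℂ) : ℂ := herm x y * herm y z * herm z x

theorem normSq_det_eq_neg_two_mul_re_hermTriple {x y z : Fin 3 → ℂ} (hx : herm x x = 0)
    (hy : herm y y = 0) (hz : herm z z = 0) :
    normSq (Matrix.of ![x, y, z]).det = -2 * (hermTriple x y z).re := by
  have h := det_herm_gram x y z x y z
  rw [Matrix.det_fin_three] at h
  simp only [Matrix.of_apply, Matrix.cons_val, hx, hy, hz] at h
  set d := (Matrix.of ![x, y, z]).det
  have h' : hermTriple x y z + conj (hermTriple x y z) = -(d * conj d) := by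
    simp only [hermTriple, map_mul, conj_herm]
    linear_combination h
  rw [add_conj, mul_conj, ← ofReal_neg, ofReal_inj] at h'
  linarith

theorem det_mul_conj_det {y z : Fin 3 → ℂ} (hy : herm y y = 0) (hz : herm z z = 0)
    (a b : Fin 3 → ℂ) :
    (Matrix.of ![a, y, z]).det * conj (Matrix.of ![b, y, z]).det =
      herm a b * herm y z * herm z y - herm a y * herm y z * herm z b
        - herm a z * herm y b * herm z y := by
  have h := det_herm_gram a y z b y z
  rw [Matrix.det_fin_three] at h
  simp only [Matrix.of_apply, Matrix.cons_val, hy, hz] at h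
  linear_combination h

theorem im_conj_mul_eq_zero_iff {u w : ℂ} : (conj u * w).im = 0 ↔ (u.re : ℂ) * w = w.re * u := by
  simp only [Complex.ext_iff, mul_re, mul_im, ofReal_re, ofReal_im, conj_re, conj_im]
  constructor
  · intro h; constructor <;> linarith
  · intro h; linarith [h.2]

theorem im_mul_eq_zero_iff {u w : ℂ} : (u * w).im = 0 ↔ (u.re : ℂ) * w = w.re * conj u := by
  simpa using im_conj_mul_eq_zero_iff (u := conj u) (w := w)

theorem re_eq_zero_of_im_conj_mul_eq_zero {u w : ℂ} (hu : u ≠ 0) (hr : u.re = 0)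
    (h : (conj u * w).im = 0) : w.re = 0 := by
  rw [im_conj_mul_eq_zero_iff, hr, ofReal_zero, zero_mul, eq_comm, mul_eq_zero] at h
  exact ofReal_eq_zero.1 (h.resolve_right hu)

theorem add_conj_eq_two_mul_re (u : ℂ) : u + conj u = 2 * u.re := by
  rw [add_conj]; push_cast; ring

section

variable {u w m T X₁ X₂ X₃ : ℂ}

theorem conditions_of_eq_ofReal {t : ℝ} (ht0 : t ≠ 0) (ht1 : t ≠ 1) (hX₁ : X₁ = t)
    (hX₂ : X₂ = 1 - t) (hX₃ : X₃ = (t - 1) / t) :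
    (X₁.im = 0 ∧ X₂.im = 0 ∧ X₁ + X₂ = 1) ∧ (X₁.im = 0 ∧ X₃.im = 0 ∧ X₃ + 1 / X₁ = 1) ∧
      (X₂.im = 0 ∧ X₃.im = 0 ∧ 1 / X₂ + 1 / X₃ = 1) ∧
      (X₁.im = 0 ∧ X₂.im = 0 ∧ X₃.im = 0 ∧ X₃ = -X₂ / X₁) := by
  subst hX₁ hX₂ hX₃
  have h₁ : (t : ℂ) ≠ 0 := ofReal_ne_zero.2 ht0
  have h₂ : (t - 1 : ℂ) ≠ 0 := sub_ne_zero.2 (by exact_mod_cast ht1)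
  have h₃ : (1 - t : ℂ) ≠ 0 := sub_ne_zero.2 (by exact_mod_cast ht1.symm)
  have him₁ : (t : ℂ).im = 0 := ofReal_im t
  have him₂ : (1 - t : ℂ).im = 0 := by simp
  have him₃ : ((t - 1) / t : ℂ).im = 0 := by
    rw [← ofReal_one, ← ofReal_sub, ← ofReal_div, ofReal_im]
  refine ⟨⟨him₁, him₂, by ring⟩, ⟨him₁, him₃, ?_⟩, ⟨him₂, him₃, ?_⟩, ⟨him₁, him₂, him₃, ?_⟩⟩ <;>
    field_simp <;> ring

theorem conditions_of_re_eq_zero (hu : u ≠ 0) (hw : w ≠ 0) (hm : m ≠ 0)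
    (hS : (normSq m : ℂ) + u * w + T * m ≠ 0) (hT : normSq T = 4 * u.re * w.re)
    (hX₁ : X₁ * normSq m = conj u * w) (hX₂ : X₂ * normSq m = normSq m + u * w + T * m)
    (hX₃ : X₃ * (u * w) = normSq m + u * w + T * m) (hr : u.re = 0) (hs : w.re = 0) :
    (X₁.im = 0 ∧ X₂.im = 0 ∧ X₁ + X₂ = 1) ∧ (X₁.im = 0 ∧ X₃.im = 0 ∧ X₃ + 1 / X₁ = 1) ∧
      (X₂.im = 0 ∧ X₃.im = 0 ∧ 1 / X₂ + 1 / X₃ = 1) ∧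
      (X₁.im = 0 ∧ X₂.im = 0 ∧ X₃.im = 0 ∧ X₃ = -X₂ / X₁) := by
  have hT0 : T = 0 := by rw [← normSq_eq_zero, hT, hr, mul_zero, zero_mul]
  have hconj : conj u = -u := Complex.ext (by simp [hr]) (by simp)
  obtain ⟨x, hx⟩ : ∃ x : ℝ, conj u * w = x :=
    ⟨(conj u * w).re, Complex.ext rfl (by simp [mul_im, hr, hs])⟩
  have hn : (normSq m : ℂ) ≠ 0 := ofReal_ne_zero.2 (normSq_eq_zero.not.2 hm)
  have hx0 : (x : ℂ) ≠ 0 := hx ▸ mul_ne_zero ((map_ne_zero conj).2 hu) hw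
  have huw : u * w = -x := by rw [← hx, hconj, neg_mul, neg_neg]
  rw [hT0, zero_mul, add_zero, huw] at hS hX₂ hX₃
  refine conditions_of_eq_ofReal (t := x / normSq m) ?_ ?_ ?_ ?_ ?_
  · exact_mod_cast div_ne_zero hx0 hn
  · rw [Ne, div_eq_one_iff_eq (ofReal_ne_zero.1 hn)]
    rintro rfl
    exact hS (add_neg_cancel _)
  · push_cast; field_simp; linear_combination hX₁.trans hx
  · push_cast; field_simp; linear_combination hX₂
  · push_cast; field_simp; linear_combination -hX₃

theorem im_conj_mul_eq_zero_of_im_eq_zero (hX₁ : X₁ * normSq m = conj u * w)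
    (h₁ : X₁.im = 0) : (conj u * w).im = 0 := by
  rw [← hX₁, im_mul_ofReal, h₁, zero_mul]

theorem re_eq_zero_of_add_eq_one (hu : u ≠ 0) (hw : w ≠ 0)
    (hS : (normSq m : ℂ) + u * w + T * m ≠ 0) (hT : normSq T = 4 * u.re * w.re)
    (hX₁ : X₁ * normSq m = conj u * w) (hX₂ : X₂ * normSq m = normSq m + u * w + T * m)
    (h₁ : X₁.im = 0) (hsum : X₁ + X₂ = 1) : u.re = 0 ∧ w.re = 0 := by
  have hK := im_conj_mul_eq_zero_of_im_eq_zero hX₁ h₁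
  suffices hr : u.re = 0 from ⟨hr, re_eq_zero_of_im_conj_mul_eq_zero hu hr hK⟩
  have hTm : T * m = -(2 * u.re * w) := by
    linear_combination normSq m * hsum - hX₁ - hX₂ - w * add_conj_eq_two_mul_re u
  by_contra hr
  have hnorm : w.re * normSq m = u.re * normSq w := by
    have h := congrArg normSq hTm
    simp only [normSq_mul, normSq_neg, hT, normSq_ofReal, normSq_ofNat] at h
    have : 4 * u.re * (w.re * normSq m - u.re * normSq w) = 0 := by linear_combination h
    simpa [hr, sub_eq_zero] using this
  have hs : w.re ≠ 0 := by
    rintro hs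
    rw [hs, zero_mul, eq_comm, mul_eq_zero, normSq_eq_zero] at hnorm
    exact hnorm.elim hr hw
  have hK' : (u.re : ℂ) * conj w = w.re * conj u := by
    simpa using congrArg conj (im_conj_mul_eq_zero_iff.1 hK)
  have hnorm' : (w.re : ℂ) * normSq m = u.re * (w * conj w) := by
    rw [mul_conj]; exact_mod_cast hnorm
  apply hS
  refine (mul_eq_zero.1 ?_).resolve_left (ofReal_ne_zero.2 hs)
  linear_combination (w.re : ℂ) * hTm + w.re * w * add_conj_eq_two_mul_re u + w * hK' + hnorm'

theorem re_eq_zero_of_add_one_div_eq_one (hu : u ≠ 0) (hw : w ≠ 0) (hm : m ≠ 0)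
    (hS : (normSq m : ℂ) + u * w + T * m ≠ 0) (hT : normSq T = 4 * u.re * w.re)
    (hX₁ : X₁ * normSq m = conj u * w) (hX₃ : X₃ * (u * w) = normSq m + u * w + T * m)
    (h₁ : X₁.im = 0) (hsum : X₃ + 1 / X₁ = 1) : u.re = 0 ∧ w.re = 0 := by
  have hK := im_conj_mul_eq_zero_of_im_eq_zero hX₁ h₁
  suffices hr : u.re = 0 from ⟨hr, re_eq_zero_of_im_conj_mul_eq_zero hu hr hK⟩
  have hX₁0 : X₁ ≠ 0 := by
    rintro rfl
    exact mul_ne_zero ((map_ne_zero conj).2 hu) hw (by rw [← hX₁, zero_mul])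
  field_simp at hsum
  have hTm : conj u * (T * m) = -(2 * u.re * normSq m) := by
    have : w * (conj u * (T * m) + 2 * u.re * normSq m) = 0 := by
      linear_combination (normSq m * u * w) * hsum - (X₁ * normSq m) * hX₃
        - (normSq m + T * m) * hX₁ - (normSq m * w) * add_conj_eq_two_mul_re u
    linear_combination (mul_eq_zero.1 this).resolve_left hw
  by_contra hr
  have hnorm : w.re * normSq u = u.re * normSq m := by
    have h := congrArg normSq hTm
    simp only [normSq_mul, normSq_neg, normSq_conj, hT, normSq_ofReal, normSq_ofNat] at h
    have : 4 * u.re * normSq m * (w.re * normSq u - u.re * normSq m) = 0 := by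
      linear_combination h
    simpa [hr, hm, sub_eq_zero] using this
  have hnorm' : (w.re : ℂ) * (u * conj u) = u.re * normSq m := by
    rw [mul_conj]; exact_mod_cast hnorm
  apply hS
  refine (mul_eq_zero.1 ?_).resolve_left
    (mul_ne_zero (ofReal_ne_zero.2 hr) ((map_ne_zero conj).2 hu))
  linear_combination (u.re : ℂ) * hTm + (u.re : ℂ) * normSq m * add_conj_eq_two_mul_re u
    + u * conj u * im_conj_mul_eq_zero_iff.1 hK + u * hnorm'

theorem re_eq_zero_of_one_div_add_one_div_eq_one (hu : u ≠ 0) (hw : w ≠ 0) (hm : m ≠ 0)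
    (hS : (normSq m : ℂ) + u * w + T * m ≠ 0) (hT : normSq T = 4 * u.re * w.re)
    (hX₂ : X₂ * normSq m = normSq m + u * w + T * m)
    (hX₃ : X₃ * (u * w) = normSq m + u * w + T * m)
    (h₂ : X₂.im = 0) (hsum : 1 / X₂ + 1 / X₃ = 1) : u.re = 0 ∧ w.re = 0 := by
  have hX₂0 : X₂ ≠ 0 := by rintro rfl; exact hS (by rw [← hX₂, zero_mul])
  have hX₃0 : X₃ ≠ 0 := by rintro rfl; exact hS (by rw [← hX₃, zero_mul])
  field_simp at hsum
  have hTm : T * m = 0 := by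
    have : (normSq m + u * w + T * m) * (T * m) = 0 := by
      linear_combination -(normSq m * u * w) * hsum + (normSq m - X₂ * normSq m) * hX₃
        + (u * w - (normSq m + u * w + T * m)) * hX₂
    exact (mul_eq_zero.1 this).resolve_left hS
  have hK : (u * w).im = 0 := by
    have := congrArg im hX₂
    rw [im_mul_ofReal, h₂, hTm] at this
    simpa using this.symm
  have hT0 : T = 0 := (mul_eq_zero.1 hTm).resolve_right hm
  rw [hT0, normSq_zero, eq_comm, mul_eq_zero, mul_eq_zero] at hT
  rw [im_mul_eq_zero_iff] at hK
  rcases hT with (h | hr) | hs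
  · norm_num at h
  · rw [hr, ofReal_zero, zero_mul, eq_comm, mul_eq_zero, map_eq_zero] at hK
    exact ⟨hr, ofReal_eq_zero.1 (hK.resolve_right hu)⟩
  · rw [hs, ofReal_zero, zero_mul, mul_eq_zero] at hK
    exact ⟨ofReal_eq_zero.1 (hK.resolve_right hw), hs⟩

theorem re_eq_zero_of_eq_neg_div (hu : u ≠ 0) (hw : w ≠ 0)
    (hS : (normSq m : ℂ) + u * w + T * m ≠ 0)
    (hX₁ : X₁ * normSq m = conj u * w) (hX₂ : X₂ * normSq m = normSq m + u * w + T * m)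
    (hX₃ : X₃ * (u * w) = normSq m + u * w + T * m)
    (h₁ : X₁.im = 0) (h : X₃ = -X₂ / X₁) : u.re = 0 ∧ w.re = 0 := by
  have hK := im_conj_mul_eq_zero_of_im_eq_zero hX₁ h₁
  suffices hr : u.re = 0 from ⟨hr, re_eq_zero_of_im_conj_mul_eq_zero hu hr hK⟩
  have hX₁0 : X₁ ≠ 0 := by
    rintro rfl
    exact mul_ne_zero ((map_ne_zero conj).2 hu) hw (by rw [← hX₁, zero_mul])
  field_simp at h
  have : (normSq m + u * w + T * m) * w * (2 * u.re) = 0 := by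
    linear_combination (normSq m * u * w) * h - (X₁ * normSq m) * hX₃
      - (normSq m + u * w + T * m) * (hX₁ + w * add_conj_eq_two_mul_re u) - (u * w) * hX₂
  simpa [hS, hw] using this

theorem tfae_re_eq_zero (hu : u ≠ 0) (hw : w ≠ 0) (hm : m ≠ 0)
    (hS : (normSq m : ℂ) + u * w + T * m ≠ 0) (hT : normSq T = 4 * u.re * w.re)
    (hX₁ : X₁ * normSq m = conj u * w) (hX₂ : X₂ * normSq m = normSq m + u * w + T * m)
    (hX₃ : X₃ * (u * w) = normSq m + u * w + T * m) :
    [u.re = 0 ∧ w.re = 0,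
     (X₁.im = 0 ∧ X₂.im = 0 ∧ X₁ + X₂ = 1),
     (X₁.im = 0 ∧ X₃.im = 0 ∧ X₃ + 1 / X₁ = 1),
     (X₂.im = 0 ∧ X₃.im = 0 ∧ 1 / X₂ + 1 / X₃ = 1),
     (X₁.im = 0 ∧ X₂.im = 0 ∧ X₃.im = 0 ∧ X₃ = -X₂ / X₁)].TFAE := by
  have hfwd := fun h : u.re = 0 ∧ w.re = 0 =>
    conditions_of_re_eq_zero hu hw hm hS hT hX₁ hX₂ hX₃ h.1 h.2
  tfae_have 1 → 2 := fun h => (hfwd h).1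
  tfae_have 1 → 3 := fun h => (hfwd h).2.1
  tfae_have 1 → 4 := fun h => (hfwd h).2.2.1
  tfae_have 1 → 5 := fun h => (hfwd h).2.2.2
  tfae_have 2 → 1 := fun ⟨h₁, _, hsum⟩ => re_eq_zero_of_add_eq_one hu hw hS hT hX₁ hX₂ h₁ hsum
  tfae_have 3 → 1 := fun ⟨h₁, _, hsum⟩ =>
    re_eq_zero_of_add_one_div_eq_one hu hw hm hS hT hX₁ hX₃ h₁ hsum
  tfae_have 4 → 1 := fun ⟨h₂, _, hsum⟩ =>
    re_eq_zero_of_one_div_add_one_div_eq_one hu hw hm hS hT hX₂ hX₃ h₂ hsum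
  tfae_have 5 → 1 := fun ⟨h₁, _, _, h⟩ => re_eq_zero_of_eq_neg_div hu hw hS hX₁ hX₂ hX₃ h₁ h
  tfae_finish

end

theorem exists_finrank_eq_two_iff_re_hermTriple_eq_zero {p : Fin 4 → Fin 3 → ℂ} (hnull : ∀ i, herm (p i) (p i) = 0)
    (h10 : LinearIndependent ℂ ![p 1, p 0]) :
    (∃ W : Submodule ℂ (Fin 3 → ℂ), Module.finrank ℂ W = 2 ∧ ∀ i, p i ∈ W) ↔
      (hermTriple (p 2) (p 1) (p 0)).re = 0 ∧ (hermTriple (p 3) (p 1) (p 0)).re = 0 := by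
  have hmem : ∀ k, p k ∈ Submodule.span ℂ (Set.range ![p 1, p 0]) ↔
      (hermTriple (p k) (p 1) (p 0)).re = 0 := fun k => by
    rw [← Matrix.det_of_vecCons_eq_zero_iff_mem_span h10, ← normSq_eq_zero,
      normSq_det_eq_neg_two_mul_re_hermTriple (hnull k) (hnull 1) (hnull 0)]
    simp
  have hrange : Set.range ![p 1, p 0] ⊆ Set.range p := by
    rintro _ ⟨i, rfl⟩
    fin_cases i <;> simp
  rw [Submodule.exists_finrank_eq_forall_mem_iff h10 hrange]
  refine ⟨fun h => ⟨(hmem 2).1 (h 2), (hmem 3).1 (h 3)⟩, fun ⟨h2, h3⟩ i => ?_⟩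
  fin_cases i
  · exact Submodule.subset_span ⟨1, rfl⟩
  · exact Submodule.subset_span ⟨0, rfl⟩
  · exact (hmem 2).2 h2
  · exact (hmem 3).2 h3

/-- Characterisations of quadruples lying on a common ℂ-circle (i.e. in a
common 2-dimensional complex subspace of ℂ³) in terms of the cross-ratios. -/
theorem common_C_circle_TFAE (p : Fin 4 → Fin 3 → ℂ)
    (hnull : ∀ i, IsNullLift (p i))
    (hprop : ∀ i j, i ≠ j → ∀ c : ℂ, p i ≠ c • p j)
    (hne : ∀ i j, i ≠ j → herm (p i) (p j) ≠ 0)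
    (X₁ X₂ X₃ : ℂ)
    (hX₁ : X₁ = crossRatio (p 0) (p 1) (p 2) (p 3))
    (hX₂ : X₂ = crossRatio (p 0) (p 2) (p 1) (p 3))
    (hX₃ : X₃ = crossRatio (p 1) (p 2) (p 0) (p 3)) :
    [(∃ W : Submodule ℂ (Fin 3 → ℂ), Module.finrank ℂ W = 2 ∧ ∀ i, p i ∈ W),
     (X₁.im = 0 ∧ X₂.im = 0 ∧ X₁ + X₂ = 1),
     (X₁.im = 0 ∧ X₃.im = 0 ∧ X₃ + 1 / X₁ = 1),
     (X₂.im = 0 ∧ X₃.im = 0 ∧ 1 / X₂ + 1 / X₃ = 1),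
     (X₁.im = 0 ∧ X₂.im = 0 ∧ X₃.im = 0 ∧ X₃ = -X₂ / X₁)].TFAE := by
  have h10 : LinearIndependent ℂ ![p 1, p 0] :=
    linearIndependent_fin2.2 ⟨(hnull 0).1, fun a h => hprop 1 0 (by decide) a h.symm⟩
  rw [exists_finrank_eq_two_iff_re_hermTriple_eq_zero (fun i => (hnull i).2) h10]
  refine tfae_re_eq_zero (m := herm (p 1) (p 0) * herm (p 2) (p 1) * herm (p 0) (p 3))
    (T := herm (p 3) (p 2) * herm (p 1) (p 0) * herm (p 0) (p 1)
      - herm (p 3) (p 1) * herm (p 1) (p 0) * herm (p 0) (p 2)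
      - herm (p 3) (p 0) * herm (p 1) (p 2) * herm (p 0) (p 1)) ?_ ?_ ?_ ?_ ?_ ?_ ?_ ?_
  · simp [hermTriple, hne]
  · simp [hermTriple, hne]
  · simp [hne]
  · convert (by simp [hne] : herm (p 0) (p 1) * herm (p 1) (p 0) * herm (p 3) (p 2) *
        (herm (p 1) (p 0) * herm (p 2) (p 1) * herm (p 0) (p 3)) ≠ 0) using 1
    rw [← mul_conj]
    simp only [hermTriple, map_mul, conj_herm]
    ring
  · rw [← det_mul_conj_det (hnull 1).2 (hnull 0).2, normSq_mul, normSq_conj,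
      normSq_det_eq_neg_two_mul_re_hermTriple (hnull 3).2 (hnull 1).2 (hnull 0).2,
      normSq_det_eq_neg_two_mul_re_hermTriple (hnull 2).2 (hnull 1).2 (hnull 0).2]
    ring
  all_goals
    rw [← mul_conj]
    simp only [hX₁, hX₂, hX₃, crossRatio, hermTriple, map_mul, conj_herm]
  · field_simp [hne]
  · field_simp [hne]
    ring
  · field_simp [hne]
    ring
end
end
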